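/- Let E be an elliptic curve defined over ℚ and let K = ℚ(√d) be a quadratic number field (d a squarefree integer). Suppose there exists a point P ∈ E(K)[2] with P ∉ E(ℚ)[2] (that is, a 2-torsion point of E rational over K but not over ℚ). If 2 divides d, then E has bad reduction at 2. -/

import Mathlib

open WeierstrassCurve WeierstrassCurve.Affine

/-- `W` is an integral model of `E` : a Weierstrass curve with integer coefficients which is
related to `E` by an admissible change of variables over `ℚ`. -/
def WeierstrassCurve.IsIntegralModel (E : WeierstrassCurve ℚ) (W : WeierstrassCurve ℤ) : Prop :=
  ∃ C : VariableChange ℚ, C • (W.map (algebraMap ℤ ℚ)) = E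

/-- `E` has good reduction at the rational prime `p` : it admits a Weierstrass model with
integer coefficients whose discriminant is not divisible by `p`. -/
def WeierstrassCurve.HasGoodReductionAt (E : WeierstrassCurve ℚ) (p : ℕ) : Prop :=
  ∃ W : WeierstrassCurve ℤ, E.IsIntegralModel W ∧ ¬ (p : ℤ) ∣ W.Δ

/-!
STATEMENT 6: Let E be an elliptic curve over ℚ and K = ℚ(√d) a quadratic number field
(d squarefree).  Suppose there exists P ∈ E(K)[2] with P ∉ E(ℚ)[2].  If 2 ∣ d, then E
has bad reduction at 2.
-/

lemma parity_aux (d : ℤ) (hd : Squarefree d) (h2d : (2:ℤ) ∣ d)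
    (z : ℤ) (hz : ¬ (2:ℤ) ∣ z) (t : ℚ) : (z : ℚ) ≠ (d : ℚ) * t ^ 2 := by
  intro h
  set w : ℚ := (d : ℚ) * t with hw
  have hw2 : w ^ 2 = ((d * z : ℤ) : ℚ) := by
    push_cast
    linear_combination (-(d:ℚ)) * h
  have hden : w.den = 1 := by
    have h1 : (w ^ 2).den = 1 := by rw [hw2]; exact Rat.den_intCast _
    rw [Rat.den_pow] at h1
    nlinarith [w.den_pos, h1]
  have hwz : (w.num : ℚ) = w := (Rat.den_eq_one_iff w).mp hden
  have hkey : w.num ^ 2 = d * z := by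
    have h2 : ((w.num : ℚ)) ^ 2 = ((d * z : ℤ) : ℚ) := by rw [hwz]; exact hw2
    exact_mod_cast h2
  have h2w : (2:ℤ) ∣ w.num := by
    apply Int.prime_two.dvd_of_dvd_pow (n := 2)
    rw [hkey]
    exact Dvd.dvd.mul_right h2d z
  obtain ⟨v, hv⟩ := h2w
  obtain ⟨e, rfl⟩ := h2d
  have h4 : w.num ^ 2 = 4 * v ^ 2 := by rw [hv]; ring
  have h2ez : (2:ℤ) ∣ e * z := ⟨v ^ 2, by linarith [hkey, h4]⟩
  rcases (Int.prime_two.dvd_mul.mp h2ez) with h2e | h2z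
  · obtain ⟨f, rfl⟩ := h2e
    have hu : IsUnit (2:ℤ) := hd 2 ⟨f, by ring⟩
    rw [Int.isUnit_iff] at hu
    omega
  · exact hz h2z

open Classical in
theorem statement_6 (E : WeierstrassCurve ℚ) [E.IsElliptic]
    (K : Type*) [Field K] [NumberField K] (hK2 : Module.finrank ℚ K = 2)
    -- `K = ℚ(√d)` with `d` a squarefree integer
    (d : ℤ) (hd : Squarefree d)
    (s : K) (hs : s ^ 2 = (d : K)) (hgen : Algebra.adjoin ℚ {s} = ⊤)
    -- there is a `2`-torsion point of `E` rational over `K` but not over `ℚ`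
    (P : (E.baseChange K).toAffine.Point) (hP2 : 2 • P = 0)
    (hPQ : ¬ ∃ Q : (E.baseChange ℚ).toAffine.Point, 2 • Q = 0 ∧ Affine.Point.baseChange (W' := E) ℚ K Q = P)
    (h2d : (2 : ℤ) ∣ d) :
    ¬ E.HasGoodReductionAt 2 := by
  rintro ⟨W, ⟨C, hC⟩, hΔ⟩
  have hι : Function.Injective (algebraMap ℚ K) := (algebraMap ℚ K).injective
  have hd0 : d ≠ 0 := hd.ne_zero
  -- `s` is irrational
  have hsnr : ∀ q : ℚ, (algebraMap ℚ K) q ≠ s := by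
    intro q hq
    have hq2 : q ^ 2 = ((d : ℤ) : ℚ) := by
      apply hι
      rw [map_pow, hq, map_intCast, hs]
    have hq0 : q ≠ 0 := by
      intro h0
      rw [h0] at hq2
      exact hd0 (by exact_mod_cast hq2.symm)
    refine parity_aux d hd h2d 1 (by norm_num) (1/q) ?_
    push_cast
    field_simp
    linarith [hq2]
  -- 2-torsion means P = -P
  rw [two_nsmul, add_eq_zero_iff_eq_neg] at hP2
  cases P with
  | zero =>
      exact hPQ ⟨0, by rw [two_nsmul, add_zero], by rw [map_zero]; rfl⟩
  | @some x y hxy =>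
      rw [Point.neg_some] at hP2
      simp only [Point.some.injEq] at hP2
      -- the y-relation and the Weierstrass equation over K
      have hy : 2 * y + algebraMap ℚ K E.a₁ * x + algebraMap ℚ K E.a₃ = 0 := by
        have h := hP2.2
        rw [negY] at h
        simp only [WeierstrassCurve.baseChange, map_a₁, map_a₃] at h
        linear_combination h
      have heq : y ^ 2 + algebraMap ℚ K E.a₁ * x * y + algebraMap ℚ K E.a₃ * y =
          x ^ 3 + algebraMap ℚ K E.a₂ * x ^ 2 + algebraMap ℚ K E.a₄ * x
            + algebraMap ℚ K E.a₆ := by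
        have h := (equation_iff x y).mp hxy.1
        simp only [WeierstrassCurve.baseChange, map_a₁, map_a₂, map_a₃, map_a₄, map_a₆] at h
        exact h
      -- the 2-division cubic
      have hcubic : 4 * x ^ 3 + algebraMap ℚ K E.b₂ * x ^ 2 + 2 * algebraMap ℚ K E.b₄ * x
          + algebraMap ℚ K E.b₆ = 0 := by
        simp only [b₂, b₄, b₆, map_add, map_mul, map_pow, map_ofNat]
        linear_combination (-4 : K) * heq
          + (algebraMap ℚ K E.a₁ * x + algebraMap ℚ K E.a₃ + 2 * y) * hy
      -- write x in the basis {s, 1}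
      have hli : LinearIndependent ℚ ![s, (1:K)] := by
        rw [linearIndependent_fin2]
        refine ⟨by simp, fun q hq => hsnr q ?_⟩
        simpa [Algebra.smul_def] using hq
      have hcard : Fintype.card (Fin 2) = Module.finrank ℚ K := by
        rw [hK2, Fintype.card_fin]
      set B := basisOfLinearIndependentOfCardEqFinrank hli hcard with hB
      obtain ⟨a, b, hx⟩ : ∃ a b : ℚ, x = algebraMap ℚ K a + algebraMap ℚ K b * s := by
        refine ⟨B.repr x 1, B.repr x 0, ?_⟩
        have hsum := B.sum_repr x
        rw [Fin.sum_univ_two] at hsum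
        have h0 : B 0 = s := by rw [hB, coe_basisOfLinearIndependentOfCardEqFinrank]; rfl
        have h1 : B 1 = 1 := by rw [hB, coe_basisOfLinearIndependentOfCardEqFinrank]; rfl
        rw [h0, h1, Algebra.smul_def, Algebra.smul_def, mul_one] at hsum
        linear_combination -hsum
      by_cases hb : b = 0
      · -- x is rational: contradiction with hPQ
        rw [hb, map_zero, zero_mul, add_zero] at hx
        exfalso
        apply hPQ
        set y₀ : ℚ := -(E.a₁ * a + E.a₃)/2 with hy₀
        have hyy : y = algebraMap ℚ K y₀ := by
          apply mul_left_cancel₀ (two_ne_zero' K)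
          rw [hy₀, map_div₀, map_neg, map_add, map_mul, map_ofNat]
          rw [hx] at hy
          linear_combination hy
        have hEq0 : E.toAffine.Equation a y₀ := by
          apply (E.toAffine.map_equation hι a y₀).mp
          have h := hxy.1
          rw [hx, hyy] at h
          exact h
        have hns : E.toAffine.Nonsingular a y₀ := E.toAffine.equation_iff_nonsingular.mp hEq0
        have hns' : (E.baseChange ℚ).toAffine.Nonsingular
            ((algebraMap ℚ ℚ) a) ((algebraMap ℚ ℚ) y₀) :=
          (E.toAffine.map_nonsingular (RingHom.injective _) a y₀).mpr hns
        refine ⟨Point.some _ _ hns', ?_, ?_⟩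
        · rw [two_nsmul]
          apply Point.add_self_of_Y_eq
          rw [negY]
          simp only [WeierstrassCurve.baseChange, map_a₁, map_a₃, Algebra.algebraMap_self, RingHom.id_apply]
          rw [hy₀]; ring
        · rw [Point.map_some]
          simp only [Point.some.injEq, Algebra.ofId_apply, Algebra.algebraMap_self,
            RingHom.id_apply]
          exact ⟨hx.symm, hyy.symm⟩
      · -- x is irrational: extract the two rational equations
        have hss : s ^ 2 = algebraMap ℚ K ((d : ℤ) : ℚ) := by rw [hs, map_intCast]
        have hdec : algebraMap ℚ K
              (4*(a^3 + 3*a*b^2*((d:ℤ):ℚ)) + E.b₂*(a^2 + b^2*((d:ℤ):ℚ)) + 2*E.b₄*a + E.b₆)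
            + algebraMap ℚ K
              (4*(3*a^2*b + b^3*((d:ℤ):ℚ)) + 2*a*b*E.b₂ + 2*E.b₄*b) * s = 0 := by
          rw [hx] at hcubic
          simp only [map_add, map_mul, map_pow, map_ofNat]
          linear_combination hcubic
            - (12*(algebraMap ℚ K a)*(algebraMap ℚ K b)^2
              + (algebraMap ℚ K E.b₂)*(algebraMap ℚ K b)^2
              + 4*(algebraMap ℚ K b)^3*s) * hss
        have he2 : 4*(3*a^2*b + b^3*((d:ℤ):ℚ)) + 2*a*b*E.b₂ + 2*E.b₄*b = 0 := by
          by_contra hne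
          have hez : algebraMap ℚ K (4*(3*a^2*b + b^3*((d:ℤ):ℚ)) + 2*a*b*E.b₂ + 2*E.b₄*b)
              ≠ 0 := fun h => hne (hι (h.trans (map_zero _).symm))
          apply hsnr (-(4*(a^3 + 3*a*b^2*((d:ℤ):ℚ)) + E.b₂*(a^2 + b^2*((d:ℤ):ℚ))
              + 2*E.b₄*a + E.b₆) / (4*(3*a^2*b + b^3*((d:ℤ):ℚ)) + 2*a*b*E.b₂ + 2*E.b₄*b))
          rw [map_div₀, map_neg, div_eq_iff hez, eq_comm]
          linear_combination hdec
        have he1 : 4*(a^3 + 3*a*b^2*((d:ℤ):ℚ)) + E.b₂*(a^2 + b^2*((d:ℤ):ℚ))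
            + 2*E.b₄*a + E.b₆ = 0 := by
          apply hι
          rw [map_zero]
          have h := hdec
          rw [he2, map_zero, zero_mul, add_zero] at h
          exact h
        have hb4 : E.b₄ = -(6*a^2 + 2*b^2*((d:ℤ):ℚ) + a*E.b₂) := by
          have h2b : (2*b : ℚ) ≠ 0 := mul_ne_zero two_ne_zero hb
          apply mul_left_cancel₀ h2b
          linear_combination he2
        have hb6 : E.b₆ = -(4*a^3 + 12*a*b^2*((d:ℤ):ℚ) + E.b₂*a^2 + E.b₂*b^2*((d:ℤ):ℚ)
            + 2*E.b₄*a) := by linear_combination he1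
        have hb8 : E.b₈ = (E.b₂*E.b₆ - E.b₄^2)/4 := by
          linear_combination (1/4 : ℚ) * E.b_relation
        have hΔE : E.Δ = ((d:ℤ):ℚ) * ((b/2)*(12*a+E.b₂)^2 - 8*b^3*((d:ℤ):ℚ))^2 := by
          have hdef : E.Δ = -E.b₂^2*E.b₈ - 8*E.b₄^3 - 27*E.b₆^2 + 9*E.b₂*E.b₄*E.b₆ := rfl
          rw [hdef, hb8, hb6, hb4]
          ring
        have hu : (C.u : ℚ) ≠ 0 := C.u.ne_zero
        have hWΔ : ((W.Δ : ℤ) : ℚ) = (C.u : ℚ)^12 * E.Δ := by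
          rw [← hC, variableChange_Δ, map_Δ]
          simp only [Units.val_inv_eq_inv_val, eq_intCast, inv_pow]
          field_simp
        refine parity_aux d hd h2d W.Δ (by simpa using hΔ)
          ((C.u : ℚ)^6 * ((b/2)*(12*a+E.b₂)^2 - 8*b^3*((d:ℤ):ℚ))) ?_
        rw [hWΔ, hΔE]
        ring
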